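/- arXiv:2503.19705 — 2 statements merged into one kernel-verified Lean document; each statement's English description precedes it below -/
import Mathlib

section
/- Let μ = (μ(n))_{n≥0} be a probability sequence with μ(1) = 0 and 0 < μ(0) < 1, and let f(z) = Σ_n μ(n)z^n and h(z) = f(z) − μ(0). Define ν(0) = 1 − Σ_{n≥2} μ(n)(1−μ(0))^n, ν(1) = 0, and for k ≥ 2, ν(k) = Σ_{n≥2} μ(n) Σ_{i_1+⋯+i_n = k, each i_j ≥ 1} ∏_{j=1}^n μ(i_j). Then Σ_{k≥0} ν(k) = 1 (so ν is a probability sequence), and its generating function g(z) = Σ_k ν(k)z^k satisfies g(z) = ν(0) + h(h(z)) for all z ∈ [0,1]. -/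
/-- The offspring sequence `ν` built from `μ` : `ν(0) = 1 − Σ_{n≥2} μ(n)(1−μ(0))^n`, `ν(1) = 0`,
and, for `k ≥ 2`, `ν(k) = Σ_{n≥2} μ(n) Σ_{i₁+⋯+iₙ=k, iⱼ≥1} ∏ⱼ μ(iⱼ)`. -/
noncomputable def nu (μ : ℕ → ℝ) : ℕ → ℝ
  | 0 => 1 - ∑' n : ℕ, (if 2 ≤ n then μ n * (1 - μ 0) ^ n else 0)
  | 1 => 0
  | (k + 2) => ∑' n : ℕ, (if 2 ≤ n then
      μ n * ∑ x ∈ (Finset.Nat.antidiagonalTuple n (k + 2)).filter (fun x => ∀ j, 1 ≤ x j),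
        ∏ j, μ (x j)
      else 0)

/-- The generating function `f(z) = Σ μ(n) zⁿ`. -/
noncomputable def genFun (μ : ℕ → ℝ) (z : ℝ) : ℝ := ∑' n : ℕ, μ n * z ^ n

/-!
Write `h(z) = Σ_{m ≥ 1} μ(m) zᵐ`. Expanding `h(z)ⁿ` as a sum over `n`-tuples of exponents and
grouping the tuples by their sum `k` gives `h(h(z)) = Σ_k (Σ_n μ(n) Σ_{i₁+⋯+iₙ=k} ∏ⱼ μ(iⱼ)) zᵏ`,
where only tuples with positive entries contribute. The coefficients of `z⁰` and `z¹` vanish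
because `μ(1) = 0`, and the others are the `ν(k)`. All terms are nonnegative, so the rearrangements
are carried out in `[0, ∞]`. Finally `h(1) = 1 − μ(0)`, so `ν(0) = 1 − h(h(1))` gives `g(1) = 1`.
-/

open Finset Finset.Nat Function
open scoped ENNReal

namespace ENNReal

theorem tsum_fin_pi_prod (c : ℕ → ℝ≥0∞) (n : ℕ) :
    ∑' x : Fin n → ℕ, ∏ j, c (x j) = (∑' m, c m) ^ n := by
  induction n with
  | zero => simp
  | succ n ih =>
    rw [← (Fin.consEquiv fun _ : Fin (n + 1) => ℕ).tsum_eq, ENNReal.tsum_prod']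
    simp only [Fin.consEquiv_apply, Fin.prod_univ_succ, Fin.cons_zero, Fin.cons_succ,
      ENNReal.tsum_mul_left, ih, ENNReal.tsum_mul_right, pow_succ']

theorem tsum_fin_pi_eq_tsum_sum_antidiagonalTuple (n : ℕ) (f : (Fin n → ℕ) → ℝ≥0∞) :
    ∑' x : Fin n → ℕ, f x = ∑' k, ∑ x ∈ antidiagonalTuple n k, f x := by
  rw [← (sigmaAntidiagonalTupleEquivTuple n).tsum_eq, ENNReal.tsum_sigma']
  exact tsum_congr fun k => Finset.tsum_subtype _ f

theorem tsum_mul_pow_pow (c : ℕ → ℝ≥0∞) (u : ℝ≥0∞) (n : ℕ) :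
    (∑' m, c m * u ^ m) ^ n = ∑' k, (∑ x ∈ antidiagonalTuple n k, ∏ j, c (x j)) * u ^ k := by
  rw [← tsum_fin_pi_prod, tsum_fin_pi_eq_tsum_sum_antidiagonalTuple]
  refine tsum_congr fun k => ?_
  rw [Finset.sum_mul]
  refine Finset.sum_congr rfl fun x hx => ?_
  rw [Finset.prod_mul_distrib, Finset.prod_pow_eq_pow_sum, mem_antidiagonalTuple.mp hx]

theorem tsum_mul_pow_le_one {c : ℕ → ℝ≥0∞} (hc : ∑' m, c m ≤ 1) {u : ℝ≥0∞} (hu : u ≤ 1) :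
    ∑' m, c m * u ^ m ≤ 1 :=
  (ENNReal.tsum_le_tsum fun _ => mul_le_of_le_one_right' (pow_le_one₀ zero_le hu)).trans hc

end ENNReal

/-- The coefficients of the composition `Σₙ b(n) (Σₘ c(m) uᵐ)ⁿ`. -/
noncomputable def compCoeff (b c : ℕ → ℝ≥0∞) (k : ℕ) : ℝ≥0∞ :=
  ∑' n, b n * ∑ x ∈ antidiagonalTuple n k, ∏ j, c (x j)

theorem tsum_mul_tsum_mul_pow_pow (b c : ℕ → ℝ≥0∞) (u : ℝ≥0∞) :
    ∑' n, b n * (∑' m, c m * u ^ m) ^ n = ∑' k, compCoeff b c k * u ^ k := by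
  simp_rw [ENNReal.tsum_mul_pow_pow, ← ENNReal.tsum_mul_left]
  rw [ENNReal.tsum_comm]
  refine tsum_congr fun k => ?_
  rw [compCoeff, ← ENNReal.tsum_mul_right]
  exact tsum_congr fun n => (mul_assoc _ _ _).symm

theorem tsum_compCoeff_mul_pow_le_one {b c : ℕ → ℝ≥0∞} (hb : ∑' n, b n ≤ 1)
    (hc : ∑' m, c m ≤ 1) {u : ℝ≥0∞} (hu : u ≤ 1) : ∑' k, compCoeff b c k * u ^ k ≤ 1 := by
  rw [← tsum_mul_tsum_mul_pow_pow]
  exact ENNReal.tsum_mul_pow_le_one hb (ENNReal.tsum_mul_pow_le_one hc hu)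

theorem compCoeff_le_one {b c : ℕ → ℝ≥0∞} (hb : ∑' n, b n ≤ 1) (hc : ∑' m, c m ≤ 1) (k : ℕ) :
    compCoeff b c k ≤ 1 := by
  simpa using (ENNReal.le_tsum k).trans (tsum_compCoeff_mul_pow_le_one hb hc le_rfl)

theorem summable_of_tsum_ne_zero {α : Type*} {f : α → ℝ} (h : ∑' a, f a ≠ 0) : Summable f :=
  by_contra fun hs => h (tsum_eq_zero_of_not_summable hs)

theorem tsum_eq_toReal_tsum_ofReal {α : Type*} {f : α → ℝ} (hf : ∀ a, 0 ≤ f a) :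
    ∑' a, f a = (∑' a, ENNReal.ofReal (f a)).toReal := by
  rw [ENNReal.tsum_toReal_eq fun _ => ENNReal.ofReal_ne_top]
  exact tsum_congr fun a => (ENNReal.toReal_ofReal (hf a)).symm

section GenFun

variable {μ : ℕ → ℝ} {z : ℝ}

theorem genFun_eq_toReal (hμ : ∀ n, 0 ≤ μ n) (hz : 0 ≤ z) :
    genFun μ z = (∑' n, ENNReal.ofReal (μ n) * ENNReal.ofReal z ^ n).toReal := by
  rw [genFun, tsum_eq_toReal_tsum_ofReal fun n => mul_nonneg (hμ n) (pow_nonneg hz n)]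
  simp_rw [ENNReal.ofReal_mul (hμ _), ENNReal.ofReal_pow hz]

theorem genFun_nonneg (hμ : ∀ n, 0 ≤ μ n) (hz : 0 ≤ z) : 0 ≤ genFun μ z :=
  tsum_nonneg fun n => mul_nonneg (hμ n) (pow_nonneg hz n)

theorem mul_pow_le_of_mem_Icc (hμ : ∀ n, 0 ≤ μ n) (hz : z ∈ Set.Icc 0 1) (n : ℕ) :
    μ n * z ^ n ≤ μ n :=
  mul_le_of_le_one_right (hμ n) (pow_le_one₀ hz.1 hz.2)

theorem summable_genFun (hμ : ∀ n, 0 ≤ μ n) (hs : Summable μ) (hz : z ∈ Set.Icc 0 1) :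
    Summable fun n => μ n * z ^ n :=
  hs.of_nonneg_of_le (fun n => mul_nonneg (hμ n) (pow_nonneg hz.1 n))
    (mul_pow_le_of_mem_Icc hμ hz)

theorem genFun_le_tsum (hμ : ∀ n, 0 ≤ μ n) (hs : Summable μ) (hz : z ∈ Set.Icc 0 1) :
    genFun μ z ≤ ∑' n, μ n :=
  (summable_genFun hμ hs hz).tsum_le_tsum (mul_pow_le_of_mem_Icc hμ hz) hs

theorem genFun_update_zero (hs : Summable fun n => μ n * z ^ n) :
    genFun (update μ 0 0) z = genFun μ z - μ 0 := by
  rw [genFun, genFun, hs.tsum_eq_add_tsum_ite 0, pow_zero, mul_one, add_sub_cancel_left]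
  refine tsum_congr fun n => ?_
  rcases eq_or_ne n 0 with rfl | hn <;> simp [*]

theorem genFun_update_zero_eq_tsum_ite (h1 : μ 1 = 0) :
    genFun (update μ 0 0) z = ∑' n, if 2 ≤ n then μ n * z ^ n else 0 := by
  refine tsum_congr fun n => ?_
  match n with
  | 0 => simp
  | 1 => simp [h1]
  | n + 2 => simp

end GenFun

def posAntidiagonalTuple (n k : ℕ) : Finset (Fin n → ℕ) :=
  (antidiagonalTuple n k).filter fun x => ∀ j, 1 ≤ x j

theorem posAntidiagonalTuple_eq_empty {n k : ℕ} (h : k < n) : posAntidiagonalTuple n k = ∅ := by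
  refine Finset.filter_eq_empty_iff.mpr fun x hx hpos => ?_
  have := Finset.card_nsmul_le_sum univ x 1 fun j _ => hpos j
  simp only [card_univ, Fintype.card_fin, smul_eq_mul, mul_one,
    mem_antidiagonalTuple.mp hx] at this
  omega

noncomputable def nuTerm (μ : ℕ → ℝ) (k n : ℕ) : ℝ :=
  if 2 ≤ n then μ n * ∑ x ∈ posAntidiagonalTuple n k, ∏ j, μ (x j) else 0

theorem nu_add_two (μ : ℕ → ℝ) (k : ℕ) : nu μ (k + 2) = ∑' n, nuTerm μ (k + 2) n := rfl

theorem nuTerm_nonneg {μ : ℕ → ℝ} (hμ : ∀ n, 0 ≤ μ n) (k n : ℕ) : 0 ≤ nuTerm μ k n := by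
  unfold nuTerm
  split_ifs
  · exact mul_nonneg (hμ n) (sum_nonneg fun x _ => prod_nonneg fun j _ => hμ (x j))
  · exact le_rfl

theorem nuTerm_of_le_one (μ : ℕ → ℝ) {k : ℕ} (hk : k ≤ 1) (n : ℕ) : nuTerm μ k n = 0 := by
  unfold nuTerm
  split_ifs with hn
  · rw [posAntidiagonalTuple_eq_empty (by omega), sum_empty, mul_zero]
  · rfl

/-- The coefficients of `h = f − μ(0)`, in `[0, ∞]`. -/
noncomputable def ofRealTail (μ : ℕ → ℝ) (m : ℕ) : ℝ≥0∞ :=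
  ENNReal.ofReal (update μ 0 0 m)

section OfRealTail

variable {μ : ℕ → ℝ}

theorem update_zero_nonneg (hμ : ∀ n, 0 ≤ μ n) (n : ℕ) : 0 ≤ update μ 0 0 n := by
  rcases eq_or_ne n 0 with rfl | hn <;> simp [*]

theorem tsum_ofRealTail_le_one (hμ : ∀ n, 0 ≤ μ n) (hsum : ∑' n, μ n = 1) :
    ∑' m, ofRealTail μ m ≤ 1 := by
  have hs : Summable μ := summable_of_tsum_ne_zero (hsum ▸ one_ne_zero)
  calc ∑' m, ofRealTail μ m ≤ ∑' m, ENNReal.ofReal (μ m) := by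
        refine ENNReal.tsum_le_tsum fun m => ENNReal.ofReal_le_ofReal ?_
        rcases eq_or_ne m 0 with rfl | hm <;> simp [*]
    _ = 1 := by rw [← ENNReal.ofReal_tsum_of_nonneg hμ hs, hsum, ENNReal.ofReal_one]

theorem genFun_update_zero_eq_toReal (hμ : ∀ n, 0 ≤ μ n) {z : ℝ} (hz : 0 ≤ z) :
    genFun (update μ 0 0) z = (∑' m, ofRealTail μ m * ENNReal.ofReal z ^ m).toReal :=
  genFun_eq_toReal (update_zero_nonneg hμ) hz

theorem sum_antidiagonalTuple_prod_ofRealTail (hμ : ∀ n, 0 ≤ μ n) (n k : ℕ) :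
    ∑ x ∈ antidiagonalTuple n k, ∏ j, ofRealTail μ (x j) =
      ENNReal.ofReal (∑ x ∈ posAntidiagonalTuple n k, ∏ j, μ (x j)) := by
  have hzero : ∀ x ∈ antidiagonalTuple n k, ∏ j, ofRealTail μ (x j) ≠ 0 → ∀ j, 1 ≤ x j :=
    fun x _ hne j => Nat.one_le_iff_ne_zero.mpr fun hj =>
      hne (prod_eq_zero (mem_univ j) (by simp [ofRealTail, hj]))
  rw [← sum_filter_of_ne hzero, ENNReal.ofReal_sum_of_nonneg
    fun x _ => prod_nonneg fun j _ => hμ (x j)]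
  refine sum_congr rfl fun x hx => ?_
  rw [ENNReal.ofReal_prod_of_nonneg fun j _ => hμ (x j)]
  refine prod_congr rfl fun j _ => ?_
  have hj : x j ≠ 0 := Nat.one_le_iff_ne_zero.mp ((mem_filter.mp hx).2 j)
  simp [ofRealTail, hj]

theorem compCoeff_ofRealTail (hμ : ∀ n, 0 ≤ μ n) (h1 : μ 1 = 0) (k : ℕ) :
    compCoeff (ofRealTail μ) (ofRealTail μ) k = ∑' n, ENNReal.ofReal (nuTerm μ k n) := by
  refine tsum_congr fun n => ?_
  rw [sum_antidiagonalTuple_prod_ofRealTail hμ]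
  match n with
  | 0 => simp [ofRealTail, nuTerm]
  | 1 => simp [ofRealTail, nuTerm, h1]
  | n + 2 => simp [ofRealTail, nuTerm, ENNReal.ofReal_mul (hμ _)]

theorem compCoeff_ofRealTail_zero (hμ : ∀ n, 0 ≤ μ n) (h1 : μ 1 = 0) :
    compCoeff (ofRealTail μ) (ofRealTail μ) 0 = 0 := by
  simp [compCoeff_ofRealTail hμ h1, nuTerm_of_le_one μ zero_le_one]

theorem ofReal_nu_add_one (hμ : ∀ n, 0 ≤ μ n) (hsum : ∑' n, μ n = 1) (h1 : μ 1 = 0) (k : ℕ) :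
    ENNReal.ofReal (nu μ (k + 1)) = compCoeff (ofRealTail μ) (ofRealTail μ) (k + 1) := by
  match k with
  | 0 => simp [nu, compCoeff_ofRealTail hμ h1, nuTerm_of_le_one μ le_rfl]
  | k + 1 =>
    have hle := tsum_ofRealTail_le_one hμ hsum
    rw [nu_add_two, tsum_eq_toReal_tsum_ofReal (nuTerm_nonneg hμ _), ← compCoeff_ofRealTail hμ h1,
      ENNReal.ofReal_toReal (ne_top_of_le_ne_top ENNReal.one_ne_top (compCoeff_le_one hle hle _))]

theorem genFun_nu_eq (hμ : ∀ n, 0 ≤ μ n) (hsum : ∑' n, μ n = 1) (h1 : μ 1 = 0)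
    (hnu : ∀ k, 0 ≤ nu μ k) {z : ℝ} (hz : z ∈ Set.Icc 0 1) :
    genFun (nu μ) z = nu μ 0 + genFun (update μ 0 0) (genFun (update μ 0 0) z) := by
  have hP := tsum_ofRealTail_le_one hμ hsum
  have hu : ENNReal.ofReal z ≤ 1 := ENNReal.ofReal_le_one.mpr hz.2
  have hcomp := tsum_compCoeff_mul_pow_le_one hP hP hu
  have hinner : ENNReal.ofReal (genFun (update μ 0 0) z) =
      ∑' m, ofRealTail μ m * ENNReal.ofReal z ^ m := by
    rw [genFun_update_zero_eq_toReal hμ hz.1, ENNReal.ofReal_toReal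
      (ne_top_of_le_ne_top ENNReal.one_ne_top (ENNReal.tsum_mul_pow_le_one hP hu))]
  calc genFun (nu μ) z = (∑' k, ENNReal.ofReal (nu μ k) * ENNReal.ofReal z ^ k).toReal :=
        genFun_eq_toReal hnu hz.1
    _ = (ENNReal.ofReal (nu μ 0) + ∑' k,
          compCoeff (ofRealTail μ) (ofRealTail μ) k * ENNReal.ofReal z ^ k).toReal := by
        rw [tsum_eq_zero_add' ENNReal.summable, tsum_eq_zero_add' ENNReal.summable (f := fun k =>
          compCoeff (ofRealTail μ) (ofRealTail μ) k * ENNReal.ofReal z ^ k),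
          compCoeff_ofRealTail_zero hμ h1]
        simp only [ofReal_nu_add_one hμ hsum h1, pow_zero, mul_one, zero_add]
    _ = nu μ 0 + (∑' k,
          compCoeff (ofRealTail μ) (ofRealTail μ) k * ENNReal.ofReal z ^ k).toReal := by
        rw [ENNReal.toReal_add ENNReal.ofReal_ne_top (ne_top_of_le_ne_top ENNReal.one_ne_top hcomp),
          ENNReal.toReal_ofReal (hnu 0)]
    _ = nu μ 0 + genFun (update μ 0 0) (genFun (update μ 0 0) z) := by
        rw [← tsum_mul_tsum_mul_pow_pow, ← hinner, genFun_update_zero_eq_toReal hμ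
          (genFun_nonneg (update_zero_nonneg hμ) hz.1)]

end OfRealTail

theorem stmt_3_general (μ : ℕ → ℝ) (hnonneg : ∀ n, 0 ≤ μ n) (hsum : (∑' n : ℕ, μ n) = 1)
    (h1 : μ 1 = 0) (h : ℝ → ℝ) (hh : ∀ z, h z = genFun μ z - μ 0) :
    (∀ k, 0 ≤ nu μ k) ∧ (∑' k : ℕ, nu μ k) = 1 ∧
      ∀ z ∈ Set.Icc (0 : ℝ) 1, (∑' k : ℕ, nu μ k * z ^ k) = nu μ 0 + h (h z) := by
  have hs : Summable μ := summable_of_tsum_ne_zero (hsum ▸ one_ne_zero)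
  have hh_eq : ∀ z ∈ Set.Icc (0 : ℝ) 1, h z = genFun (update μ 0 0) z := fun z hz => by
    rw [hh, genFun_update_zero (summable_genFun hnonneg hs hz)]
  have hh_mem : ∀ z ∈ Set.Icc (0 : ℝ) 1, h z ∈ Set.Icc (0 : ℝ) 1 := fun z hz =>
    ⟨hh_eq z hz ▸ genFun_nonneg (update_zero_nonneg hnonneg) hz.1,
      by linarith [hh z, genFun_le_tsum hnonneg hs hz, hnonneg 0]⟩
  have h_one : h 1 = 1 - μ 0 := by simp [hh, genFun, hsum]
  have hone_mem : (1 : ℝ) ∈ Set.Icc (0 : ℝ) 1 := ⟨zero_le_one, le_rfl⟩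
  have hnu_zero : nu μ 0 = 1 - h (h 1) := by
    rw [hh_eq _ (hh_mem 1 hone_mem), genFun_update_zero_eq_tsum_ite h1, h_one]
    rfl
  have hnu : ∀ k, 0 ≤ nu μ k
    | 0 => by linarith [(hh_mem _ (hh_mem 1 hone_mem)).2]
    | 1 => le_rfl
    | k + 2 => tsum_nonneg (nuTerm_nonneg hnonneg (k + 2))
  have hgen : ∀ z ∈ Set.Icc (0 : ℝ) 1, ∑' k, nu μ k * z ^ k = nu μ 0 + h (h z) := fun z hz => by
    rw [hh_eq (h z) (hh_mem z hz), hh_eq z hz]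
    exact genFun_nu_eq hnonneg hsum h1 hnu hz
  refine ⟨hnu, ?_, hgen⟩
  simpa [hnu_zero] using hgen 1 hone_mem

/-- If `μ` is a probability sequence with `μ(1) = 0` and `0 < μ(0) < 1`, and
`h(z) = f(z) − μ(0)`, then `ν` is a probability sequence and its generating function
`g(z) = Σ ν(k) z^k` satisfies `g(z) = ν(0) + h(h(z))` on `[0, 1]`. -/
theorem stmt_3 (μ : ℕ → ℝ) (hnonneg : ∀ n, 0 ≤ μ n) (hsum : (∑' n : ℕ, μ n) = 1)
    (h1 : μ 1 = 0) (h00 : 0 < μ 0) (h01 : μ 0 < 1)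
    (h : ℝ → ℝ) (hh : ∀ z, h z = genFun μ z - μ 0) :
    (∀ k, 0 ≤ nu μ k) ∧ (∑' k : ℕ, nu μ k) = 1 ∧
      ∀ z ∈ Set.Icc (0 : ℝ) 1, (∑' k : ℕ, nu μ k * z ^ k) = nu μ 0 + h (h z) :=
  stmt_3_general μ hnonneg hsum h1 h hh
end

section
/- Let μ = (μ(n))_{n≥0} be a probability sequence with μ(1) = 0, 0 < μ(0) < 1, generating function f(z) = Σ_n μ(n)z^n, and suppose μ is critical, i.e., f'(1) = Σ_n nμ(n) = 1. Define ν(0) = 1 − Σ_{n≥2} μ(n)(1−μ(0))^n, ν(1) = 0, and for k ≥ 2, ν(k) = Σ_{n≥2} μ(n) Σ_{i_1+⋯+i_n = k, each i_j ≥ 1} ∏_{j=1}^n μ(i_j). Then the mean of ν satisfies Σ_k kν(k) = f'(1−μ(0)) < 1; in particular ν is subcritical. -/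
open scoped ENNReal
set_option maxHeartbeats 1000000

lemma my_tsum_eq_toReal {f : ℕ → ℝ} (hf : ∀ n, 0 ≤ f n) :
    ∑' n, f n = (∑' n, ENNReal.ofReal (f n)).toReal := by
  by_cases h : Summable f
  · rw [← ENNReal.ofReal_tsum_of_nonneg hf h, ENNReal.toReal_ofReal (tsum_nonneg hf)]
  · rw [tsum_eq_zero_of_not_summable h]
    by_cases h2 : (∑' n, ENNReal.ofReal (f n)) = ∞
    · rw [h2]; simp
    · exact absurd ((ENNReal.summable_toReal h2).congr
        (fun n => ENNReal.toReal_ofReal (hf n))) h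

lemma my_tsum_pi_prod : ∀ (n : ℕ) (f : Fin n → ℕ → ℝ≥0∞),
    ∑' x : Fin n → ℕ, ∏ j, f j (x j) = ∏ j, ∑' m, f j m := by
  intro n
  induction n with
  | zero => intro f; simp [tsum_fintype]
  | succ n ih =>
    intro f
    rw [← Equiv.tsum_eq (Fin.consEquiv fun _ => ℕ), ENNReal.tsum_prod']
    have h1 : ∀ (a : ℕ) (b : Fin n → ℕ),
        (∏ j, f j ((Fin.consEquiv fun _ => ℕ) (a, b) j))
          = f 0 a * ∏ j, f j.succ (b j) := by
      intro a b
      rw [Fin.prod_univ_succ]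
      simp [Fin.consEquiv]
    simp_rw [h1]
    rw [Fin.prod_univ_succ]
    simp_rw [ENNReal.tsum_mul_left]
    rw [ENNReal.tsum_mul_right, ih]


/-- The derivative of the generating function of `μ`: `f'(z) = Σ n μ(n) z^(n−1)`. -/
noncomputable def genFunDeriv (μ : ℕ → ℝ) (z : ℝ) : ℝ := ∑' n : ℕ, (n : ℝ) * μ n * z ^ (n - 1)

/-- If `μ` is a critical probability sequence (`Σ n μ(n) = 1`) with `μ(1) = 0` and
`0 < μ(0) < 1`, then the mean of `ν` equals `f'(1 − μ(0))`, which is strictly less than 1;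
in particular `ν` is subcritical. -/
theorem stmt_4 (μ : ℕ → ℝ) (hnonneg : ∀ n, 0 ≤ μ n) (hsum : (∑' n : ℕ, μ n) = 1)
    (h1 : μ 1 = 0) (h00 : 0 < μ 0) (h01 : μ 0 < 1)
    (hcrit : (∑' n : ℕ, (n : ℝ) * μ n) = 1) :
    (∑' k : ℕ, (k : ℝ) * nu μ k) = genFunDeriv μ (1 - μ 0) ∧
      genFunDeriv μ (1 - μ 0) < 1 := by
  set z : ℝ := 1 - μ 0 with hz
  have hz0 : 0 ≤ z := by simp [hz]; linarith
  set p : ℕ → ℝ≥0∞ := fun n => ENNReal.ofReal (μ n) with hp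
  set q : ℕ → ℝ≥0∞ := fun m => if 1 ≤ m then p m else 0 with hq
  set A : ℝ≥0∞ := ENNReal.ofReal z with hA
  have hμsum : Summable μ := by
    by_contra h; rw [tsum_eq_zero_of_not_summable h] at hsum; norm_num at hsum
  have hμcrit : Summable (fun n : ℕ => (n : ℝ) * μ n) := by
    by_contra h; rw [tsum_eq_zero_of_not_summable h] at hcrit; norm_num at hcrit
  have hpsum : ∑' n, p n = 1 := by
    rw [hp, ← ENNReal.ofReal_tsum_of_nonneg hnonneg hμsum, hsum, ENNReal.ofReal_one]
  have hpcrit : ∑' n : ℕ, (n : ℝ≥0∞) * p n = 1 := by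
    have h : ∀ n : ℕ, (n : ℝ≥0∞) * p n = ENNReal.ofReal ((n : ℝ) * μ n) := fun n => by
      rw [ENNReal.ofReal_mul (by positivity), ENNReal.ofReal_natCast]
    rw [tsum_congr h, ← ENNReal.ofReal_tsum_of_nonneg (fun n => mul_nonneg (Nat.cast_nonneg n) (hnonneg n)) hμcrit,
      hcrit, ENNReal.ofReal_one]
  have hp1 : p 1 = 0 := by simp [hp, h1]
  have hA1 : A ≤ 1 := by rw [hA]; exact ENNReal.ofReal_le_one.mpr (by simp [hz]; linarith)
  have hAne : A ≠ ∞ := ENNReal.ofReal_ne_top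
  have hfin : p 0 ≠ ∞ := ENNReal.ofReal_ne_top
  have h2 : p 0 + A = 1 := by
    rw [hp, hA, ← ENNReal.ofReal_add h00.le hz0, hz]; norm_num
  have hqsum : ∑' m, q m = A := by
    have e1 : ∑' m, q m = q 0 + ∑' m, q (m + 1) := tsum_eq_zero_add' ENNReal.summable
    have e2 : ∑' m : ℕ, p m = p 0 + ∑' m, p (m + 1) := tsum_eq_zero_add' ENNReal.summable
    rw [hpsum, ← h2] at e2
    have e3 : ∑' m, p (m + 1) = A := (ENNReal.add_right_inj hfin).mp e2.symm
    rw [e1, ← e3]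
    simp [hq]
  have hqcrit : ∑' m : ℕ, (m : ℝ≥0∞) * q m = 1 := by
    have h : ∀ m : ℕ, (m : ℝ≥0∞) * q m = (m : ℝ≥0∞) * p m := by
      intro m; rcases m with _ | m <;> simp [hq]
    rw [tsum_congr h, hpcrit]
  set SE : ℕ → ℕ → ℝ≥0∞ :=
    fun n k => ∑ x ∈ Finset.Nat.antidiagonalTuple n k, ∏ j, q (x j) with hSE
  have q0 : q 0 = 0 := by simp [hq]
  have hSEsub : ∀ n k, SE n k = ENNReal.ofReal
      (∑ x ∈ (Finset.Nat.antidiagonalTuple n k).filter (fun x => ∀ j, 1 ≤ x j),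
        ∏ j, μ (x j)) := by
    intro n k
    show (∑ x ∈ Finset.Nat.antidiagonalTuple n k, ∏ j, q (x j)) = _
    rw [← Finset.sum_filter_add_sum_filter_not (Finset.Nat.antidiagonalTuple n k)
      (fun x => ∀ j, 1 ≤ x j)]
    have hz2 : ∑ x ∈ (Finset.Nat.antidiagonalTuple n k).filter (fun x => ¬ ∀ j, 1 ≤ x j),
        ∏ j, q (x j) = 0 := by
      apply Finset.sum_eq_zero
      intro x hx
      obtain ⟨-, hx2⟩ := Finset.mem_filter.mp hx
      push_neg at hx2
      obtain ⟨j, hj⟩ := hx2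
      have hj0 : x j = 0 := by omega
      exact Finset.prod_eq_zero (Finset.mem_univ j) (by rw [hj0, q0])
    rw [hz2, add_zero, ENNReal.ofReal_sum_of_nonneg
      (fun x _ => Finset.prod_nonneg fun j _ => hnonneg _)]
    refine Finset.sum_congr rfl fun x hx => ?_
    rw [ENNReal.ofReal_prod_of_nonneg (fun j _ => hnonneg _)]
    obtain ⟨-, hx2⟩ := Finset.mem_filter.mp hx
    exact Finset.prod_congr rfl fun j _ => by simp [hq, hp, hx2 j]
  have prod_ite : ∀ {n : ℕ} (j : Fin n) (c d : Fin n → ℝ≥0∞),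
      (∏ i, if i = j then c i * d i else d i) = c j * ∏ i, d i := by
    intro n j c d
    have h1 : (∏ i, if i = j then c i * d i else d i)
        = (c j * d j) * ∏ i ∈ Finset.univ.erase j, d i := by
      rw [← Finset.mul_prod_erase Finset.univ _ (Finset.mem_univ j), if_pos rfl]
      congr 1
      exact Finset.prod_congr rfl fun i hi => if_neg (Finset.ne_of_mem_erase hi)
    rw [h1, ← Finset.mul_prod_erase Finset.univ d (Finset.mem_univ j), mul_assoc]
  have keyn : ∀ n : ℕ, ∑' k : ℕ, (k : ℝ≥0∞) * SE n k = (n : ℝ≥0∞) * A ^ (n - 1) := by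
    intro n
    have step1 : ∑' k : ℕ, (k : ℝ≥0∞) * SE n k
        = ∑' x : Fin n → ℕ, (∑ j, ((x j : ℕ) : ℝ≥0∞)) * ∏ j, q (x j) := by
      rw [← Equiv.tsum_eq (Finset.Nat.sigmaAntidiagonalTupleEquivTuple n)
        (fun x => (∑ j, ((x j : ℕ) : ℝ≥0∞)) * ∏ j, q (x j)), ENNReal.tsum_sigma']
      refine tsum_congr fun k => ?_
      have hcoe : ∀ (x : {x // x ∈ Finset.Nat.antidiagonalTuple n k}),
          (∑ j, (((Finset.Nat.sigmaAntidiagonalTupleEquivTuple n) ⟨k, x⟩ j : ℕ) : ℝ≥0∞)) *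
            ∏ j, q ((Finset.Nat.sigmaAntidiagonalTupleEquivTuple n) ⟨k, x⟩ j)
          = (∑ j, (((x : Fin n → ℕ) j : ℕ) : ℝ≥0∞)) * ∏ j, q ((x : Fin n → ℕ) j) := fun x => rfl
      rw [tsum_congr hcoe, Finset.tsum_subtype (Finset.Nat.antidiagonalTuple n k)
        (fun y => (∑ j, ((y j : ℕ) : ℝ≥0∞)) * ∏ j, q (y j)), Finset.mul_sum]
      refine Finset.sum_congr rfl fun x hx => ?_
      have hsx : ∑ i, x i = k := Finset.Nat.mem_antidiagonalTuple.mp hx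
      have : (∑ j, ((x j : ℕ) : ℝ≥0∞)) = (k : ℝ≥0∞) := by
        rw [← hsx, Nat.cast_sum]
      rw [this]
    rw [step1]
    have step2 : ∑' x : Fin n → ℕ, (∑ j, ((x j : ℕ) : ℝ≥0∞)) * ∏ j, q (x j)
        = ∑ j : Fin n, ∑' x : Fin n → ℕ, ((x j : ℕ) : ℝ≥0∞) * ∏ i, q (x i) := by
      rw [← Summable.tsum_finsetSum (fun j _ => ENNReal.summable)]
      exact tsum_congr fun x => Finset.sum_mul _ _ _
    rw [step2]
    have step3 : ∀ j : Fin n, ∑' x : Fin n → ℕ, ((x j : ℕ) : ℝ≥0∞) * ∏ i, q (x i)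
        = A ^ (n - 1) := by
      intro j
      have e : ∀ x : Fin n → ℕ, ((x j : ℕ) : ℝ≥0∞) * ∏ i, q (x i)
          = ∏ i, (fun (i : Fin n) (m : ℕ) =>
              if i = j then (m : ℝ≥0∞) * q m else q m) i (x i) := by
        intro x
        have := prod_ite j (fun i => ((x i : ℕ) : ℝ≥0∞)) (fun i => q (x i))
        simp only at this ⊢
        rw [← this]
      rw [tsum_congr e, my_tsum_pi_prod n (fun (i : Fin n) (m : ℕ) => if i = j then (m : ℝ≥0∞) * q m else q m)]
      have hval : ∀ i : Fin n, (∑' m : ℕ, (fun (i : Fin n) (m : ℕ) =>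
          if i = j then (m : ℝ≥0∞) * q m else q m) i m) = if i = j then 1 else A := by
        intro i
        by_cases h : i = j
        · simp only [if_pos h]; simpa using hqcrit
        · simp only [if_neg h]; exact hqsum
      rw [Finset.prod_congr rfl fun i _ => hval i]
      have h4 : ∏ i ∈ Finset.univ.erase j, (if i = j then (1 : ℝ≥0∞) else A)
          = A ^ (n - 1) := by
        rw [Finset.prod_congr rfl (fun i hi => if_neg (Finset.ne_of_mem_erase hi)),
          Finset.prod_const, Finset.card_erase_of_mem (Finset.mem_univ j),
          Finset.card_univ, Fintype.card_fin]
      rw [← Finset.mul_prod_erase Finset.univ _ (Finset.mem_univ j), if_pos rfl, one_mul, h4]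
    rw [Finset.sum_congr rfl fun j _ => step3 j, Finset.sum_const, Finset.card_univ,
      Fintype.card_fin, nsmul_eq_mul]
  have hfilter_empty : ∀ n k : ℕ, k < n →
      (Finset.Nat.antidiagonalTuple n k).filter (fun x => ∀ j, 1 ≤ x j) = ∅ := by
    intro n k hk
    rw [Finset.filter_eq_empty_iff]
    intro x hx hall
    have hsx : ∑ i, x i = k := Finset.Nat.mem_antidiagonalTuple.mp hx
    have hle : (n : ℕ) ≤ ∑ i, x i := by
      calc (n : ℕ) = ∑ _i : Fin n, 1 := by simp
        _ ≤ ∑ i, x i := Finset.sum_le_sum fun i _ => hall i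
    omega
  have hSE1 : ∀ n, 2 ≤ n → SE n 1 = 0 := by
    intro n hn
    show (∑ x ∈ Finset.Nat.antidiagonalTuple n 1, ∏ j, q (x j)) = 0
    apply Finset.sum_eq_zero
    intro x hx
    have hsx : ∑ i, x i = 1 := Finset.Nat.mem_antidiagonalTuple.mp hx
    have hex : ∃ j, x j = 0 := by
      by_contra hc
      push_neg at hc
      have hle : (n : ℕ) ≤ ∑ i, x i := by
        calc (n : ℕ) = ∑ _i : Fin n, 1 := by simp
          _ ≤ ∑ i, x i := Finset.sum_le_sum fun i _ =>
              Nat.one_le_iff_ne_zero.mpr (hc i)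
      omega
    obtain ⟨j, hj⟩ := hex
    exact Finset.prod_eq_zero (Finset.mem_univ j) (by rw [hj, q0])
  have claimA : ∀ k : ℕ, (k : ℝ≥0∞) * ENNReal.ofReal (nu μ k)
      = (k : ℝ≥0∞) * ∑' n : ℕ, (if 2 ≤ n then p n * SE n k else 0) := by
    intro k
    match k with
    | 0 => simp
    | 1 =>
      have h0 : ∀ n : ℕ, (if 2 ≤ n then p n * SE n 1 else 0) = 0 := by
        intro n
        split
        · rw [hSE1 n (by assumption), mul_zero]
        · rfl
      rw [tsum_congr h0, tsum_zero, mul_zero]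
      norm_num [nu]
    | (k + 2) =>
      congr 1
      have hreal : nu μ (k + 2) = ∑ n ∈ Finset.range (k + 3),
          (if 2 ≤ n then μ n * ∑ x ∈ (Finset.Nat.antidiagonalTuple n (k + 2)).filter
            (fun x => ∀ j, 1 ≤ x j), ∏ j, μ (x j) else 0) := by
        show (∑' n : ℕ, _) = _
        apply tsum_eq_sum
        intro n hn
        rw [Finset.mem_range, not_lt] at hn
        split
        · rw [hfilter_empty n (k + 2) (by omega), Finset.sum_empty, mul_zero]
        · rfl
      have hE : ∑' n : ℕ, (if 2 ≤ n then p n * SE n (k + 2) else 0)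
          = ∑ n ∈ Finset.range (k + 3), (if 2 ≤ n then p n * SE n (k + 2) else 0) := by
        apply tsum_eq_sum
        intro n hn
        rw [Finset.mem_range, not_lt] at hn
        split
        · rw [hSEsub, hfilter_empty n (k + 2) (by omega), Finset.sum_empty,
            ENNReal.ofReal_zero, mul_zero]
        · rfl
      rw [hreal, hE, ENNReal.ofReal_sum_of_nonneg]
      · refine Finset.sum_congr rfl fun n _ => ?_
        split
        · rw [ENNReal.ofReal_mul (hnonneg n), hSEsub]
        · exact ENNReal.ofReal_zero
      · intro n _
        split
        · exact mul_nonneg (hnonneg n) (Finset.sum_nonneg fun x _ =>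
            Finset.prod_nonneg fun j _ => hnonneg _)
        · exact le_refl 0
  have LHS_E : ∑' k : ℕ, (k : ℝ≥0∞) * ENNReal.ofReal (nu μ k)
      = ∑' n : ℕ, (n : ℝ≥0∞) * p n * A ^ (n - 1) := by
    calc ∑' k : ℕ, (k : ℝ≥0∞) * ENNReal.ofReal (nu μ k)
        = ∑' k : ℕ, ∑' n : ℕ, (if 2 ≤ n then (k : ℝ≥0∞) * (p n * SE n k) else 0) := by
          refine tsum_congr fun k => ?_
          rw [claimA k, ← ENNReal.tsum_mul_left]
          exact tsum_congr fun n => by rw [mul_ite, mul_zero]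
      _ = ∑' n : ℕ, ∑' k : ℕ, (if 2 ≤ n then (k : ℝ≥0∞) * (p n * SE n k) else 0) :=
          ENNReal.tsum_comm
      _ = ∑' n : ℕ, (if 2 ≤ n then p n * ((n : ℝ≥0∞) * A ^ (n - 1)) else 0) := by
          refine tsum_congr fun n => ?_
          by_cases h : 2 ≤ n
          · simp only [if_pos h]
            rw [← keyn n, ← ENNReal.tsum_mul_left]
            exact tsum_congr fun k => by ring
          · simp [h]
      _ = ∑' n : ℕ, (n : ℝ≥0∞) * p n * A ^ (n - 1) := by
          refine tsum_congr fun n => ?_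
          match n with
          | 0 => simp
          | 1 => simp [hp1]
          | (m + 2) => rw [if_pos (by omega)]; ring
  have hknn : ∀ k : ℕ, 0 ≤ (k : ℝ) * nu μ k := by
    intro k
    match k with
    | 0 => simp
    | 1 => simp [nu]
    | (k + 2) =>
      refine mul_nonneg (Nat.cast_nonneg _) (tsum_nonneg fun n => ?_)
      split
      · exact mul_nonneg (hnonneg n) (Finset.sum_nonneg fun x _ =>
          Finset.prod_nonneg fun j _ => hnonneg _)
      · exact le_refl 0
  have hLreal : (∑' k : ℕ, (k : ℝ) * nu μ k)
      = (∑' n : ℕ, (n : ℝ≥0∞) * p n * A ^ (n - 1)).toReal := by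
    rw [my_tsum_eq_toReal hknn, ← LHS_E]
    congr 1
    refine tsum_congr fun k => ?_
    rw [ENNReal.ofReal_mul (Nat.cast_nonneg k), ENNReal.ofReal_natCast]
  have hRreal : genFunDeriv μ z
      = (∑' n : ℕ, (n : ℝ≥0∞) * p n * A ^ (n - 1)).toReal := by
    rw [genFunDeriv, my_tsum_eq_toReal (fun n => mul_nonneg
      (mul_nonneg (Nat.cast_nonneg n) (hnonneg n)) (pow_nonneg hz0 _))]
    congr 1
    refine tsum_congr fun n => ?_
    rw [ENNReal.ofReal_mul (mul_nonneg (Nat.cast_nonneg n) (hnonneg n)),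
      ENNReal.ofReal_mul (Nat.cast_nonneg n), ENNReal.ofReal_natCast,
      ENNReal.ofReal_pow hz0]
  have hbound : ∑' n : ℕ, (n : ℝ≥0∞) * p n * A ^ (n - 1) ≤ A := by
    calc ∑' n : ℕ, (n : ℝ≥0∞) * p n * A ^ (n - 1)
        ≤ ∑' n : ℕ, A * ((n : ℝ≥0∞) * p n) := by
          refine ENNReal.tsum_le_tsum fun n => ?_
          match n with
          | 0 => simp
          | 1 => simp [hp1]
          | (m + 2) =>
            rw [mul_comm A]
            refine mul_le_mul_right ?_ _
            have hred : (m + 2) - 1 = m + 1 := rfl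
            rw [hred, pow_succ]
            calc A ^ m * A ≤ 1 * A := mul_le_mul_left (pow_le_one' hA1 m) A
              _ = A := one_mul A
      _ = A * ∑' n : ℕ, (n : ℝ≥0∞) * p n := ENNReal.tsum_mul_left
      _ = A := by rw [hpcrit, mul_one]
  constructor
  · rw [hLreal, hRreal]
  · rw [hRreal]
    calc (∑' n : ℕ, (n : ℝ≥0∞) * p n * A ^ (n - 1)).toReal
        ≤ A.toReal := ENNReal.toReal_mono hAne hbound
      _ = z := ENNReal.toReal_ofReal hz0
      _ < 1 := by rw [hz]; linarith
end
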